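/- arXiv:0906.0997 — 4 statements merged into one kernel-verified Lean document; each statement's English description precedes it below -/
import Mathlib

section
/- For any two distinct pairs (s₁,s₂) ≠ (s₁',s₂') of complex numbers, the difference of Alamouti matrices X(s₁,s₂) − X(s₁',s₂') is invertible, where X(s₁,s₂) = [[s₁, −conj(s₂)],[s₂, conj(s₁)]]. -/
open Complex

/-- The Alamouti map. -/
noncomputable def alamouti (s₁ s₂ : ℂ) : Matrix (Fin 2) (Fin 2) ℂ :=
  !![s₁, -(starRingEnd ℂ s₂); s₂, starRingEnd ℂ s₁]

/-- Differences of distinct Alamouti matrices are invertible. -/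
theorem stmt_1 (s₁ s₂ s₁' s₂' : ℂ) (h : (s₁, s₂) ≠ (s₁', s₂')) :
    IsUnit (alamouti s₁ s₂ - alamouti s₁' s₂') := by
  rw [Matrix.isUnit_iff_isUnit_det, isUnit_iff_ne_zero]
  have hdet : (alamouti s₁ s₂ - alamouti s₁' s₂').det
      = (normSq (s₁ - s₁') + normSq (s₂ - s₂') : ℝ) := by
    simp [alamouti, Matrix.det_fin_two, normSq_eq_conj_mul_self]
    ring
  rw [hdet]
  intro hz
  have : normSq (s₁ - s₁') + normSq (s₂ - s₂') = 0 := by exact_mod_cast hz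
  have h1 : s₁ - s₁' = 0 := by
    have := normSq_nonneg (s₁ - s₁'); have := normSq_nonneg (s₂ - s₂')
    have : normSq (s₁ - s₁') = 0 := by linarith
    exact normSq_eq_zero.mp this
  have h2 : s₂ - s₂' = 0 := by
    have := normSq_nonneg (s₁ - s₁'); have := normSq_nonneg (s₂ - s₂')
    have : normSq (s₂ - s₂') = 0 := by linarith
    exact normSq_eq_zero.mp this
  exact h (by simp [sub_eq_zero.mp h1, sub_eq_zero.mp h2])
end

section
/- Let K/F be a Galois extension of fields of degree n with cyclic Galois group generated by σ, and let γ ∈ F be nonzero such that γ^i is not a norm from K to F for any i = 1, …, n−1. Then the cyclic algebra D = ⊕_{i=0}^{n−1} K uⁱ with relations uk = σ(k)u and uⁿ = γ is a division algebra. -/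
/-!
If `d ≠ 0` is not a unit, the left ideal `W = D d` is a proper nonzero subspace of `D` for the
left `K`-structure given by `ι`, so its dimension `m` satisfies `0 < m < n`. Left multiplication
by `u` preserves `W`, is `σ`-semilinear, and its `n`-th iterate is multiplication by `γ`. If `A`
is its matrix in a basis of `W`, the `n`-th iterate has matrix `A σ(A) ⋯ σⁿ⁻¹(A)`, whose
determinant is `∏ σⁱ(det A) = N(det A)`; it is also the scalar matrix `γ`, of determinant `γ^m`.
-/

open Finset Module Matrix

theorem prod_univ_eq_prod_range_pow {G M : Type*} [Group G] [Fintype G] [CommMonoid M] {g : G}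
    (hg : ∀ x : G, x ∈ Subgroup.zpowers g) (f : G → M) :
    ∏ x, f x = ∏ i ∈ range (Nat.card G), f (g ^ i) := by
  classical
  rw [← IsCyclic.image_range_card hg, prod_image]
  rw [← orderOf_eq_card_of_forall_mem_zpowers hg]
  exact fun i hi j hj => pow_injOn_Iio_orderOf (mem_range.1 hi) (mem_range.1 hj)

theorem algebraMap_norm_eq_prod_range_pow {F K : Type*} [Field F] [Field K] [Algebra F K]
    [FiniteDimensional F K] [IsGalois F K] {σ : K ≃ₐ[F] K}
    (hσ : ∀ τ : K ≃ₐ[F] K, τ ∈ Subgroup.zpowers σ) (x : K) :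
    algebraMap F K (Algebra.norm F x) = ∏ t ∈ range (finrank F K), (σ ^ t) x := by
  rw [Algebra.norm_eq_prod_automorphisms, prod_univ_eq_prod_range_pow hσ,
    IsGalois.card_aut_eq_finrank]

theorem Fintype.bijective_linearCombination_of_existsUnique {ι R M : Type*} [Fintype ι]
    [Semiring R] [AddCommMonoid M] [Module R M] {v : ι → M}
    (hv : ∀ x : M, ∃! c : ι → R, x = ∑ i, c i • v i) :
    Function.Bijective (Fintype.linearCombination R v) := by
  refine ⟨fun c c' h => (hv _).unique (Fintype.linearCombination_apply R v c).symm ?_,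
    fun x => ?_⟩
  · simpa [Fintype.linearCombination_apply] using h
  · obtain ⟨c, hc, -⟩ := hv x
    exact ⟨c, (Fintype.linearCombination_apply R v c).trans hc.symm⟩

namespace Matrix

variable {ι R : Type*} [Fintype ι] [DecidableEq ι] [CommRing R]

/-- `A τ(A) ⋯ τʳ⁻¹(A)`, the matrix of the `r`-th iterate of a `τ`-semilinear map of matrix `A`. -/
def twistedPow (A : Matrix ι ι R) (τ : R →+* R) : ℕ → Matrix ι ι R
  | 0 => 1
  | r + 1 => twistedPow A τ r * A.map (τ ^ r)

theorem det_twistedPow (A : Matrix ι ι R) (τ : R →+* R) (r : ℕ) :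
    (A.twistedPow τ r).det = ∏ t ∈ range r, (τ ^ t) A.det := by
  induction r with
  | zero => simp [twistedPow]
  | succ r ih =>
    rw [twistedPow, det_mul, ih, prod_range_succ]
    exact congrArg _ (RingHom.map_det _ A).symm

end Matrix

namespace Module.Basis

variable {ι R V : Type*} [Fintype ι] [CommRing R] [AddCommGroup V] [Module R V]
  (b : Basis ι R V) {τ : R →+* R}

noncomputable def semilinearToMatrix (T : V →ₛₗ[τ] V) : Matrix ι ι R :=
  Matrix.of fun i j => b.equivFun (T (b j)) i

theorem equivFun_semilinear_apply (T : V →ₛₗ[τ] V) (v : V) :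
    b.equivFun (T v) = b.semilinearToMatrix T *ᵥ (τ ∘ b.equivFun v) := by
  conv_lhs => rw [← b.sum_equivFun v, map_sum, map_sum]
  ext i
  simp only [map_smulₛₗ, Finset.sum_apply, Pi.smul_apply, smul_eq_mul]
  simp [Matrix.mulVec, dotProduct, semilinearToMatrix, mul_comm]

theorem equivFun_iterate_semilinear [DecidableEq ι] (T : V →ₛₗ[τ] V) (v : V) (r : ℕ) :
    b.equivFun (T^[r] v) =
      (b.semilinearToMatrix T).twistedPow τ r *ᵥ ((τ ^ r) ∘ b.equivFun v) := by
  induction r generalizing v with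
  | zero => simp [Matrix.twistedPow]
  | succ r ih =>
    rw [Function.iterate_succ_apply, ih, equivFun_semilinear_apply, Matrix.twistedPow,
      ← Matrix.mulVec_mulVec]
    congr 1
    ext i
    rw [Function.comp_apply, RingHom.map_mulVec]
    simp [pow_succ, Function.comp_def]

end Module.Basis

theorem exists_norm_eq_pow_finrank_of_iterate_eq_smul {F K V : Type*} [Field F] [Field K]
    [Algebra F K] [FiniteDimensional F K] [IsGalois F K] [AddCommGroup V] [Module K V]
    [FiniteDimensional K V] {σ : K ≃ₐ[F] K} (hσ : ∀ τ : K ≃ₐ[F] K, τ ∈ Subgroup.zpowers σ)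
    (T : V →ₛₗ[(σ : K →+* K)] V) (c : F)
    (hT : ∀ v, T^[finrank F K] v = algebraMap F K c • v) :
    ∃ x : K, Algebra.norm F x = c ^ finrank K V := by
  classical
  let b := finBasis K V
  set A := b.semilinearToMatrix T
  have hA : A.twistedPow σ (finrank F K) = algebraMap F K c • 1 := by
    refine ext_of_mulVec_single fun j => ?_
    have h := b.equivFun_iterate_semilinear T (b j) (finrank F K)
    have hsingle : ∀ ρ : K →+* K, ρ ∘ Pi.single j 1 = Pi.single j 1 := fun ρ => by
      ext i; by_cases hij : i = j <;> simp [hij]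
    rw [hT, map_smul, b.equivFun_apply, b.repr_self, Finsupp.single_eq_pi_single, hsingle] at h
    rw [← h, smul_mulVec, one_mulVec]
  refine ⟨A.det, (algebraMap F K).injective ?_⟩
  have hpow (t : ℕ) (x : K) : (σ ^ t) x = ((σ : K →+* K) ^ t) x := by
    rw [RingHom.coe_pow, AlgEquiv.coe_pow]
    rfl
  rw [algebraMap_norm_eq_prod_range_pow hσ, map_pow]
  simp_rw [hpow]
  rw [← det_twistedPow, hA, det_smul, det_one, mul_one, Fintype.card_fin]

section LeftIdeal

variable {F K D : Type*} [Field F] [Field K] [Algebra F K] [Ring D] [Module K D]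
  [IsScalarTower K D D]

def semilinearMulLeft (τ : K →+* K) (u : D)
    (hu : ∀ (k : K) (x : D), u * (k • x) = τ k • (u * x)) : D →ₛₗ[τ] D where
  toFun := (u * ·)
  map_add' := mul_add u
  map_smul' := hu

theorem exists_norm_eq_pow_of_not_isUnit [FiniteDimensional F K] [IsGalois F K]
    [FiniteDimensional K D] {σ : K ≃ₐ[F] K} (hσ : ∀ τ : K ≃ₐ[F] K, τ ∈ Subgroup.zpowers σ)
    (u : D) (hu : ∀ (k : K) (x : D), u * (k • x) = σ k • (u * x)) (c : F)
    (hun : u ^ finrank F K = algebraMap F K c • 1) {d : D} (hd : d ≠ 0) (hdu : ¬IsUnit d) :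
    ∃ m, 0 < m ∧ m < finrank K D ∧ ∃ x : K, Algebra.norm F x = c ^ m := by
  set W := LinearMap.range (LinearMap.mulRight K d)
  have hdW : d ∈ W := ⟨1, one_mul d⟩
  have hW : W ≠ ⊤ := fun h => hdu <| by
    obtain ⟨x, hx⟩ : (1 : D) ∈ W := h ▸ Submodule.mem_top
    -- finite-dimensional over `K`, hence artinian, hence Dedekind-finite
    have : IsArtinianRing D := isArtinian_of_tower K inferInstance
    exact IsUnit.of_mul_eq_one_right x hx
  let T : W →ₛₗ[(σ : K →+* K)] W := (semilinearMulLeft _ u hu).restrict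
    fun _ ⟨y, hy⟩ => ⟨u * y, by rw [← hy]; exact mul_assoc u y d⟩
  have hT : ∀ (r : ℕ) (w : W), ((T^[r] w : W) : D) = u ^ r * w := by
    intro r
    induction r with
    | zero => simp
    | succ r ih =>
      intro w
      rw [Function.iterate_succ_apply']
      change u * ((T^[r] w : W) : D) = _
      rw [ih, pow_succ', mul_assoc]
  refine ⟨finrank K W, Submodule.one_le_finrank_iff.2 (Submodule.ne_bot_iff _ |>.2 ⟨d, hdW, hd⟩),
    Submodule.finrank_lt hW, exists_norm_eq_pow_finrank_of_iterate_eq_smul hσ T c fun w => ?_⟩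
  ext
  rw [hT, hun, smul_mul_assoc, one_mul]
  rfl

end LeftIdeal

theorem stmt_7_general (F K : Type*) [Field F] [Field K] [Algebra F K] [IsGalois F K]
    (n : ℕ) (hn : 0 < n) (hdeg : Module.finrank F K = n)
    (σ : K ≃ₐ[F] K) (hσ : ∀ τ : K ≃ₐ[F] K, τ ∈ Subgroup.zpowers σ)
    (γ : F)
    (hnorm : ∀ i ∈ Finset.Icc 1 (n - 1), ∀ x : K, Algebra.norm F x ≠ γ ^ i)
    (D : Type*) [Ring D] [Algebra F D]
    (ι : K →ₐ[F] D) (u : D)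
    (hrel : ∀ k : K, u * ι k = ι (σ k) * u)
    (hun : u ^ n = algebraMap F D γ)
    (hbasis : ∀ d : D, ∃! c : Fin n → K, d = ∑ i : Fin n, ι (c i) * u ^ (i : ℕ)) :
    ∀ d : D, d ≠ 0 → IsUnit d := by
  intro d hd
  by_contra hdu
  let : Module K D := Module.compHom D (ι : K →+* D)
  have : IsScalarTower K D D := ⟨fun k x y => mul_assoc (ι k) x y⟩
  have : FiniteDimensional F K := .of_finrank_pos (hdeg ▸ hn)
  let e := LinearEquiv.ofBijective _ (Fintype.bijective_linearCombination_of_existsUnique hbasis)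
  have : FiniteDimensional K D := .equiv e
  obtain ⟨m, hm, hmn, x, hx⟩ := exists_norm_eq_pow_of_not_isUnit hσ u
    (fun k x => by
      change u * (ι k * x) = ι (σ k) * (u * x)
      rw [← mul_assoc, hrel, mul_assoc])
    γ (by
      change u ^ finrank F K = ι (algebraMap F K γ) * 1
      rw [hdeg, hun, ι.commutes, mul_one])
    hd hdu
  rw [← e.finrank_eq, finrank_fin_fun] at hmn
  exact hnorm m (mem_Icc.2 ⟨hm, by omega⟩) x hx

/-- Let `K/F` be a cyclic Galois extension of degree `n` with Galois group generated by `σ`,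
and let `γ ∈ F` be nonzero with `γ^i` not a norm from `K` to `F` for `i = 1, …, n-1`.
Then the cyclic algebra `(K/F, σ, γ)` — i.e. any `F`-algebra `D` containing a copy `ι(K)` of
`K` and an element `u` with `u·ι(k) = ι(σ k)·u`, `uⁿ = γ`, such that `1, u, …, u^{n-1}` is a
`K`-basis of `D` (every element is uniquely `∑ ι(kᵢ) uⁱ`) — is a division algebra. -/
theorem stmt_7 (F K : Type*) [Field F] [Field K] [Algebra F K] [IsGalois F K]
    (n : ℕ) (hn : 0 < n) (hdeg : Module.finrank F K = n)
    (σ : K ≃ₐ[F] K) (hσ : ∀ τ : K ≃ₐ[F] K, τ ∈ Subgroup.zpowers σ)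
    (γ : F) (hγ : γ ≠ 0)
    (hnorm : ∀ i ∈ Finset.Icc 1 (n - 1), ∀ x : K, Algebra.norm F x ≠ γ ^ i)
    (D : Type*) [Ring D] [Nontrivial D] [Algebra F D]
    (ι : K →ₐ[F] D) (u : D)
    (hrel : ∀ k : K, u * ι k = ι (σ k) * u)
    (hun : u ^ n = algebraMap F D γ)
    (hbasis : ∀ d : D, ∃! c : Fin n → K, d = ∑ i : Fin n, ι (c i) * u ^ (i : ℕ)) :
    ∀ d : D, d ≠ 0 → IsUnit d :=
  stmt_7_general F K n hn hdeg σ hσ γ hnorm D ι u hrel hun hbasis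
end

section
/- The element i ∈ ℚ(i) is not a norm from ℚ(i,√5) to ℚ(i); hence the cyclic algebra (ℚ(i,√5)/ℚ(i), σ, i), where σ sends √5 to −√5, is a division algebra. -/
/-!
Writing `x = a + b√5` with `a, b ∈ ℚ(i)`, the norm of `x` is `a² - 5b²`. If `a² - 5b² = i`, the
real and imaginary parts, after clearing denominators, give integers with
`P² - Q² = 5(R² - S²)` and `2PQ - 10RS = n²`, `n ≠ 0`. Since `±2` are not squares mod `5`,
reducing mod `5` forces `5 ∣ P, Q, n` and then `5 ∣ R, S`, and dividing by `5` gives a smaller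
solution: infinite descent.

In the algebra, `d = x + y u` and `d' = σ x - y u` satisfy `d d' = d' d = x σ(x) - y σ(y) γ`,
which is a nonzero element of `K` (a unit) unless `d = 0`, because `γ` is not a norm.
-/

open Complex IntermediateField

/-- `F = ℚ(i)` as a subfield of `ℂ`. -/
noncomputable def F8 : IntermediateField ℚ ℂ := ℚ⟮Complex.I⟯

/-- `K = ℚ(i, √5) = F(√5)` as an extension of `F = ℚ(i)`. -/
noncomputable def K8 : IntermediateField F8 ℂ :=
  IntermediateField.adjoin F8 {((Real.sqrt 5 : ℝ) : ℂ)}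

/-- `√5` as an element of `K = ℚ(i,√5)`. -/
noncomputable def sqrt5K : K8 :=
  ⟨((Real.sqrt 5 : ℝ) : ℂ), IntermediateField.subset_adjoin _ _ rfl⟩

/-- `i` as an element of `F = ℚ(i)`. -/
noncomputable def iF : F8 :=
  ⟨Complex.I, IntermediateField.mem_adjoin_simple_self ℚ Complex.I⟩

theorem ZMod.eq_zero_of_sq_eq_sq_of_two_mul_eq_sq :
    ∀ p q n : ZMod 5, p ^ 2 = q ^ 2 → 2 * p * q = n ^ 2 → p = 0 ∧ q = 0 ∧ n = 0 := by
  decide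

theorem five_dvd_of_five_dvd_sq_sub_sq {p q n : ℤ} (h₁ : 5 ∣ p ^ 2 - q ^ 2)
    (h₂ : 5 ∣ 2 * p * q - n ^ 2) : 5 ∣ p ∧ 5 ∣ q ∧ 5 ∣ n := by
  have iff_dvd (a : ℤ) : (a : ZMod 5) = 0 ↔ 5 ∣ a := ZMod.intCast_zmod_eq_zero_iff_dvd a 5
  simp only [← iff_dvd, Int.cast_sub, Int.cast_mul, Int.cast_pow, Int.cast_ofNat] at h₁ h₂ ⊢
  exact ZMod.eq_zero_of_sq_eq_sq_of_two_mul_eq_sq _ _ _ (sub_eq_zero.1 h₁) (sub_eq_zero.1 h₂)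

theorem eq_zero_of_sq_sub_sq_eq_five_mul (n : ℕ) :
    ∀ p q r s : ℤ, p ^ 2 - q ^ 2 = 5 * (r ^ 2 - s ^ 2) →
      2 * p * q - 10 * r * s = n ^ 2 → n = 0 := by
  induction n using Nat.strong_induction_on with
  | _ n ih =>
  intro p q r s h₁ h₂
  by_contra hn
  obtain ⟨⟨p', rfl⟩, ⟨q', rfl⟩, hn5⟩ :=
    five_dvd_of_five_dvd_sq_sub_sq (p := p) (q := q) (n := n) ⟨_, h₁⟩
      ⟨2 * r * s, by linear_combination h₂⟩
  obtain ⟨m, rfl⟩ : 5 ∣ n := by exact_mod_cast hn5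
  push_cast at h₂
  obtain ⟨⟨r', rfl⟩, ⟨s', rfl⟩, -⟩ :=
    five_dvd_of_five_dvd_sq_sub_sq (p := r) (q := s) (n := 0) ⟨p' ^ 2 - q' ^ 2, by linarith⟩
      ⟨2 * p' * q' - m ^ 2, by linarith⟩
  have := ih m (by omega) p' q' r' s' (by linarith) (by linarith)
  omega

theorem Rat.exists_intCast_eq_mul_of_den_dvd (x : ℚ) {n : ℕ} (h : x.den ∣ n) :
    ∃ z : ℤ, (z : ℚ) = x * n := by
  obtain ⟨k, rfl⟩ := h
  exact ⟨x.num * k, by push_cast; rw [← mul_assoc, Rat.mul_den_eq_num]⟩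

theorem not_sq_sub_sq_eq_five_mul_of_two_mul_eq_one (p q r s : ℚ)
    (h₁ : p ^ 2 - q ^ 2 = 5 * (r ^ 2 - s ^ 2)) (h₂ : 2 * p * q - 10 * r * s = 1) : False := by
  set n := p.den * q.den * r.den * s.den
  obtain ⟨P, hP⟩ := p.exists_intCast_eq_mul_of_den_dvd (n := n) ⟨q.den * r.den * s.den, by ring⟩
  obtain ⟨Q, hQ⟩ := q.exists_intCast_eq_mul_of_den_dvd (n := n) ⟨p.den * r.den * s.den, by ring⟩
  obtain ⟨R, hR⟩ := r.exists_intCast_eq_mul_of_den_dvd (n := n) ⟨p.den * q.den * s.den, by ring⟩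
  obtain ⟨S, hS⟩ := s.exists_intCast_eq_mul_of_den_dvd (n := n) ⟨p.den * q.den * r.den, by ring⟩
  refine (by positivity : n ≠ 0) (eq_zero_of_sq_sub_sq_eq_five_mul n P Q R S ?_ ?_)
  · exact_mod_cast (by rw [hP, hQ, hR, hS]; linear_combination (n : ℚ) ^ 2 * h₁ :
      (P : ℚ) ^ 2 - Q ^ 2 = 5 * (R ^ 2 - S ^ 2))
  · exact_mod_cast (by rw [hP, hQ, hR, hS]; linear_combination (n : ℚ) ^ 2 * h₂ :
      2 * (P : ℚ) * Q - 10 * R * S = n ^ 2)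

theorem sq_sub_five_mul_sq_ne_I (p q r s : ℚ) :
    ((p : ℂ) + q * I) ^ 2 - 5 * ((r : ℂ) + s * I) ^ 2 ≠ I := by
  intro h
  have hre := congrArg Complex.re h
  have him := congrArg Complex.im h
  simp only [pow_two, sub_re, mul_re, add_re, ratCast_re, I_re, mul_zero, ratCast_im, I_im,
    mul_one, sub_self, add_zero, add_im, mul_im, zero_add, re_ofNat, im_ofNat, zero_mul, sub_zero,
    sub_im] at hre him
  refine not_sq_sub_sq_eq_five_mul_of_two_mul_eq_one p q r s ?_ ?_
  · exact_mod_cast (by linear_combination hre : (p : ℝ) ^ 2 - q ^ 2 = 5 * (r ^ 2 - s ^ 2))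
  · exact_mod_cast (by linear_combination him : 2 * (p : ℝ) * q - 10 * r * s = 1)

theorem Algebra.exists_eq_add_mul_of_mem_adjoin_singleton {R A : Type*} [CommRing R] [CommRing A]
    [Algebra R A] {c : A} {s : R} (hc : c * c = algebraMap R A s) {x : A}
    (hx : x ∈ Algebra.adjoin R {c}) : ∃ a b : R, x = algebraMap R A a + algebraMap R A b * c := by
  induction hx using Algebra.adjoin_induction with
  | mem y hy => exact ⟨0, 1, by simp [Set.mem_singleton_iff.1 hy]⟩
  | algebraMap r => exact ⟨r, 0, by simp⟩
  | add x y _ _ ihx ihy =>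
    obtain ⟨a, b, rfl⟩ := ihx
    obtain ⟨a', b', rfl⟩ := ihy
    exact ⟨a + a', b + b', by simp only [map_add]; ring⟩
  | mul x y _ _ ihx ihy =>
    obtain ⟨a, b, rfl⟩ := ihx
    obtain ⟨a', b', rfl⟩ := ihy
    refine ⟨a * a' + s * b * b', a * b' + a' * b, ?_⟩
    simp only [map_add, map_mul]
    linear_combination algebraMap R A b * algebraMap R A b' * hc

open Polynomial in
theorem IntermediateField.exists_eq_add_mul_of_mem_adjoin_simple {F E : Type*} [Field F] [Field E]
    [Algebra F E] {c : E} {s : F} (hc : c * c = algebraMap F E s) {x : E} (hx : x ∈ F⟮c⟯) :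
    ∃ a b : F, x = algebraMap F E a + algebraMap F E b * c := by
  have hint : IsIntegral F c :=
    ⟨X ^ 2 - C s, monic_X_pow_sub_C s two_ne_zero, by simp [pow_two, hc]⟩
  rw [← IntermediateField.mem_toSubalgebra,
    IntermediateField.adjoin_simple_toSubalgebra_of_isAlgebraic hint.isAlgebraic] at hx
  exact Algebra.exists_eq_add_mul_of_mem_adjoin_singleton hc hx

theorem F8.exists_eq_add_mul_I (a : F8) : ∃ p q : ℚ, (a : ℂ) = p + q * I := by
  obtain ⟨p, q, h⟩ := IntermediateField.exists_eq_add_mul_of_mem_adjoin_simple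
    (by simp : I * I = algebraMap ℚ ℂ (-1)) a.2
  exact ⟨p, q, by simpa using h⟩

theorem ofReal_sqrt_five_mul_self : ((Real.sqrt 5 : ℝ) : ℂ) * ((Real.sqrt 5 : ℝ) : ℂ) = 5 := by
  rw [← Complex.ofReal_mul, Real.mul_self_sqrt (by norm_num)]
  norm_num

theorem K8.exists_eq_add_mul_sqrt5 (x : K8) :
    ∃ a b : F8, x = algebraMap F8 K8 a + algebraMap F8 K8 b * sqrt5K := by
  obtain ⟨a, b, h⟩ := IntermediateField.exists_eq_add_mul_of_mem_adjoin_simple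
    (by rw [ofReal_sqrt_five_mul_self]; rfl : _ = algebraMap F8 ℂ 5) x.2
  exact ⟨a, b, Subtype.ext h⟩

theorem F8.sq_sub_five_mul_sq_ne_iF (a b : F8) : a ^ 2 - 5 * b ^ 2 ≠ iF := by
  obtain ⟨p, q, ha⟩ := F8.exists_eq_add_mul_I a
  obtain ⟨r, s, hb⟩ := F8.exists_eq_add_mul_I b
  intro h
  apply sq_sub_five_mul_sq_ne_I p q r s
  rw [← ha, ← hb]
  have h' := congrArg ((↑) : F8 → ℂ) h
  push_cast at h'
  exact h'

section CyclicAlgebra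

variable {K D : Type*} [Field K] [Ring D] (σ : K ≃+* K) {γ : K}

theorem mul_apply_sub_mul_apply_mul_ne_zero (hγ : ¬ ∃ x, x * σ x = γ) {x y : K}
    (hxy : x ≠ 0 ∨ y ≠ 0) : x * σ x - y * σ y * γ ≠ 0 := by
  intro h
  rcases eq_or_ne y 0 with rfl | hy
  · simp_all
  · refine hγ ⟨x / y, ?_⟩
    rw [map_div₀, div_mul_div_comm, div_eq_iff (mul_ne_zero hy (by simpa using hy))]
    linear_combination h

variable (ι : K →+* D) {u : D} (hcomm : ∀ k, u * ι k = ι (σ k) * u) (hu : u ^ 2 = ι γ)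
include hcomm hu

theorem mul_self_mul_eq (y : K) : (ι y * u) * (ι y * u) = ι (y * σ y * γ) := by
  calc (ι y * u) * (ι y * u) = ι y * (u * ι y) * u := by noncomm_ring
    _ = ι (y * σ y) * u ^ 2 := by rw [hcomm, map_mul, pow_two]; noncomm_ring
    _ = ι (y * σ y * γ) := by rw [hu, map_mul ι (y * σ y)]

theorem sub_mul_mul_add_mul_eq (x y : K) :
    (ι (σ x) - ι y * u) * (ι x + ι y * u) = ι (x * σ x - y * σ y * γ) := by
  have hux : u * ι x = ι (σ x) * u := hcomm x
  calc (ι (σ x) - ι y * u) * (ι x + ι y * u)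
      = ι (σ x) * ι x + ι (σ x) * ι y * u - ι y * (u * ι x) - (ι y * u) * (ι y * u) := by
        noncomm_ring
    _ = ι (x * σ x - y * σ y * γ) := by
        rw [hux, mul_self_mul_eq σ ι hcomm hu, ← mul_assoc, ← map_mul, ← map_mul, ← map_mul,
          mul_comm (σ x) y, map_sub, mul_comm x]
        noncomm_ring

theorem add_mul_mul_sub_mul_eq (hσ : Function.Involutive σ) (x y : K) :
    (ι x + ι y * u) * (ι (σ x) - ι y * u) = ι (x * σ x - y * σ y * γ) := by
  have hux : u * ι (σ x) = ι x * u := by rw [hcomm, hσ]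
  calc (ι x + ι y * u) * (ι (σ x) - ι y * u)
      = ι x * ι (σ x) - ι x * ι y * u + ι y * (u * ι (σ x)) - (ι y * u) * (ι y * u) := by
        noncomm_ring
    _ = ι (x * σ x - y * σ y * γ) := by
        rw [hux, mul_self_mul_eq σ ι hcomm hu, ← mul_assoc, ← map_mul, ← map_mul, ← map_mul,
          mul_comm x y, map_sub]
        noncomm_ring

theorem isUnit_add_mul (hσ : Function.Involutive σ) (hγ : ¬ ∃ x, x * σ x = γ) {x y : K}
    (hd : ι x + ι y * u ≠ 0) : IsUnit (ι x + ι y * u) := by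
  have hz : x * σ x - y * σ y * γ ≠ 0 := by
    refine mul_apply_sub_mul_apply_mul_ne_zero σ hγ (not_and_or.1 ?_)
    rintro ⟨rfl, rfl⟩
    simp at hd
  refine isUnit_iff_exists_and_exists.2
    ⟨⟨(ι (σ x) - ι y * u) * ι (x * σ x - y * σ y * γ)⁻¹, ?_⟩,
      ⟨ι (x * σ x - y * σ y * γ)⁻¹ * (ι (σ x) - ι y * u), ?_⟩⟩
  · rw [← mul_assoc, add_mul_mul_sub_mul_eq σ ι hcomm hu hσ, ← map_mul, mul_inv_cancel₀ hz,
      map_one]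
  · rw [mul_assoc, sub_mul_mul_add_mul_eq σ ι hcomm hu, ← map_mul, inv_mul_cancel₀ hz, map_one]

end CyclicAlgebra

theorem sqrt5K_mul_self : sqrt5K * sqrt5K = 5 :=
  Subtype.ext (by push_cast; exact ofReal_sqrt_five_mul_self)

section Conjugation

variable (σ : K8 ≃ₐ[F8] K8) (hσ : σ sqrt5K = -sqrt5K)
include hσ

theorem K8.mul_apply_add_mul_sqrt5 (a b : F8) :
    (algebraMap F8 K8 a + algebraMap F8 K8 b * sqrt5K) *
      σ (algebraMap F8 K8 a + algebraMap F8 K8 b * sqrt5K) =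
      algebraMap F8 K8 (a ^ 2 - 5 * b ^ 2) := by
  simp only [map_add, map_mul, AlgEquiv.commutes, hσ, map_sub, map_pow, map_ofNat]
  linear_combination (-(algebraMap F8 K8 b) ^ 2) * sqrt5K_mul_self

theorem K8.involutive_of_apply_sqrt5 : Function.Involutive σ := by
  intro x
  obtain ⟨a, b, rfl⟩ := K8.exists_eq_add_mul_sqrt5 x
  simp only [map_add, map_mul, AlgEquiv.commutes, hσ, map_neg, mul_neg, neg_neg]

theorem K8.not_exists_mul_apply_eq_iF : ¬ ∃ x : K8, x * σ x = algebraMap F8 K8 iF := by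
  rintro ⟨x, hx⟩
  obtain ⟨a, b, rfl⟩ := K8.exists_eq_add_mul_sqrt5 x
  rw [K8.mul_apply_add_mul_sqrt5 σ hσ] at hx
  exact F8.sq_sub_five_mul_sq_ne_iF a b ((algebraMap F8 K8).injective hx)

end Conjugation

/-- `i` is not a norm from `ℚ(i,√5)` to `ℚ(i)` (where `N(x) = x·σ(x)` for the nontrivial
automorphism `σ`), and hence the cyclic algebra `(ℚ(i,√5)/ℚ(i), σ, i)` is a division
algebra. -/
theorem stmt_8 (σ : K8 ≃ₐ[F8] K8) (hσ : σ sqrt5K = -sqrt5K) :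
    (¬ ∃ x : K8, x * σ x = algebraMap F8 K8 iF) ∧
    (∀ (D : Type) [Ring D] [Nontrivial D] [Algebra F8 D]
      (ι : K8 →ₐ[F8] D) (u : D),
        (∀ k : K8, u * ι k = ι (σ k) * u) →
        u ^ 2 = algebraMap F8 D iF →
        (∀ d : D, ∃! c : Fin 2 → K8, d = ∑ i : Fin 2, ι (c i) * u ^ (i : ℕ)) →
        ∀ d : D, d ≠ 0 → IsUnit d) := by
  have hnorm := K8.not_exists_mul_apply_eq_iF σ hσ
  refine ⟨hnorm, fun D _ _ _ ι u hcomm hu hrep d hd => ?_⟩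
  obtain ⟨c, hc, -⟩ := hrep d
  rw [Fin.sum_univ_two] at hc
  simp only [Fin.isValue, Fin.val_zero, pow_zero, mul_one, Fin.val_one, pow_one] at hc
  subst hc
  exact isUnit_add_mul (σ : K8 ≃+* K8) (ι : K8 →+* D) hcomm (by rw [hu, ← ι.commutes]; rfl)
    (K8.involutive_of_apply_sqrt5 σ hσ) hnorm hd
end

section
/- Let n = 2ᵇ, K = ℚ(ζ) with ζ a primitive 2^{b+2}-th root of unity, F = ℚ(i), and σ a generator of Gal(K/F). Then the n×n matrix U with entries U_{j,k} = (1/√n)·σ^{j}(ζ^{k}) (for 0 ≤ j,k ≤ n−1) is unitary. -/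
/-!
Write `n = 2^b` and `K = F(ζ)` with `F = ℚ(i)`. Since `ζ^n = ±i` lies in `F`, every `x_j = σʲ(ζ)`
is a root of `X^n = ζ^n`, and the `x_j` (`0 ≤ j < n`) are distinct because `σ` has order
`[K : F] ≥ [ℚ(ζ) : ℚ] / [F : ℚ] ≥ 2n / 2`. The matrix is `n^{-1/2}` times the Vandermonde matrix of
the `x_j`, and the inner product of its rows `i, j` is the geometric sum of the `n`-th root of unity
`x_i / x_j`, which vanishes unless `i = j`.
-/

open Complex IntermediateField Matrix Polynomial

/-- `F = ℚ(i)` as a subfield of `ℂ`. -/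
noncomputable def QI : IntermediateField ℚ ℂ := ℚ⟮Complex.I⟯

theorem geom_sum_eq_zero_of_pow_eq_one {K : Type*} [DivisionRing K] {w : K} {n : ℕ}
    (hw : w ≠ 1) (hwn : w ^ n = 1) : ∑ i ∈ Finset.range n, w ^ i = 0 := by
  rw [geom_sum_eq hw, hwn, sub_self, zero_div]

theorem Matrix.vandermonde_mul_conjTranspose_of_pow_eq {n : ℕ} {x : Fin n → ℂ}
    (hx : Function.Injective x) {a : ℂ} (ha : ‖a‖ = 1) (hxa : ∀ i, x i ^ n = a) :
    vandermonde x * (vandermonde x)ᴴ = (n : ℂ) • 1 := by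
  have hstar : ∀ i, star (x i) = (x i)⁻¹ := fun i => by
    have hnorm : ‖x i‖ ^ n = 1 := by rw [← norm_pow, hxa, ha]
    rw [Complex.inv_eq_conj ((pow_eq_one_iff_of_nonneg (norm_nonneg _) i.pos.ne').1 hnorm)]
    rfl
  have ha0 : a ≠ 0 := by rintro rfl; simp at ha
  have hne : ∀ i, x i ≠ 0 := fun i h => ha0 (by rw [← hxa i, h, zero_pow i.pos.ne'])
  ext i j
  have hentry : (vandermonde x * (vandermonde x)ᴴ) i j
      = ∑ k ∈ Finset.range n, (x i / x j) ^ k := by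
    rw [mul_apply, ← Fin.sum_univ_eq_sum_range]
    simp only [conjTranspose_apply, vandermonde_apply, star_pow, hstar, div_eq_mul_inv, mul_pow]
  rw [hentry, Matrix.smul_apply, smul_eq_mul]
  rcases eq_or_ne i j with rfl | hij
  · simp [div_self (hne i)]
  · rw [one_apply_ne hij, mul_zero]
    refine geom_sum_eq_zero_of_pow_eq_one ?_ ?_
    · exact fun h => hij (hx ((div_eq_one_iff_eq (hne j)).1 h))
    · rw [div_pow, hxa, hxa, div_self ha0]

theorem Matrix.inv_sqrt_smul_vandermonde_mul_conjTranspose {n : ℕ} {x : Fin n → ℂ}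
    (hx : Function.Injective x) {a : ℂ} (ha : ‖a‖ = 1) (hxa : ∀ i, x i ^ n = a) :
    ((1 / (Real.sqrt n : ℂ)) • vandermonde x) * ((1 / (Real.sqrt n : ℂ)) • vandermonde x)ᴴ
      = 1 := by
  have hstar : star (1 / (Real.sqrt n : ℂ)) = 1 / (Real.sqrt n : ℂ) := by simp
  have hsqrt : (Real.sqrt n : ℂ) ^ 2 = n := by
    rw [← ofReal_pow, Real.sq_sqrt n.cast_nonneg, ofReal_natCast]
  rcases n.eq_zero_or_pos with rfl | hn
  · exact Subsingleton.elim _ _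
  rw [conjTranspose_smul, Matrix.smul_mul, Matrix.mul_smul, smul_smul,
    vandermonde_mul_conjTranspose_of_pow_eq hx ha hxa, smul_smul, hstar, ← sq, div_pow, hsqrt,
    one_pow, one_div_mul_cancel (Nat.cast_ne_zero.2 hn.ne'), one_smul]

theorem IsPrimitiveRoot.isCyclotomicExtension_adjoin_simple {F L : Type*} [Field F] [Field L]
    [Algebra F L] {n : ℕ} [NeZero n] {ζ : L} (hζ : IsPrimitiveRoot ζ n) :
    IsCyclotomicExtension {n} F F⟮ζ⟯ := by
  have hint : IsIntegral F ζ := .of_pow (NeZero.pos n) (hζ.pow_eq_one ▸ isIntegral_one)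
  change IsCyclotomicExtension {n} F F⟮ζ⟯.toSubalgebra
  rw [adjoin_simple_toSubalgebra_of_isAlgebraic hint.isAlgebraic]
  exact hζ.adjoin_isCyclotomicExtension F

theorem IntermediateField.AdjoinSimple.injOn_pow_apply_gen {F E : Type*} [Field F] [Field E]
    [Algebra F E] {α : E} (σ : F⟮α⟯ ≃ₐ[F] F⟮α⟯) :
    (Set.Iio (orderOf σ)).InjOn fun i : ℕ => (σ ^ i) (AdjoinSimple.gen F α) := by
  intro i hi j hj h
  refine pow_injOn_Iio_orderOf hi hj (AlgEquiv.coe_toAlgHom_injective ?_)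
  exact adjoin_algHom_ext F fun x hx => by obtain rfl := hx; exact h

theorem IntermediateField.algEquiv_apply_eq_self_of_algebraMap_eq {K L : Type*} [Field K]
    [Field L] [Algebra K L] {E : IntermediateField K L} (τ : E ≃ₐ[K] E) {x : E} {c : K}
    (hc : algebraMap K L c = x) : τ x = x := by
  obtain rfl : algebraMap K E c = x := Subtype.ext hc
  exact τ.commutes c

instance : FiniteDimensional ℚ QI := adjoin.finiteDimensional isIntegral_rat_I

theorem finrank_QI_le_two : Module.finrank ℚ QI ≤ 2 := by
  have hroot : aeval I (X ^ 2 + C 1 : ℚ[X]) = 0 := by simp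
  rw [QI, adjoin.finrank isIntegral_rat_I, ← natDegree_X_pow_add_C (n := 2) (r := (1 : ℚ))]
  exact natDegree_le_natDegree
    (minpoly.degree_le_of_ne_zero ℚ I (X_pow_add_C_ne_zero two_pos 1) hroot)

theorem pow_two_pow_mem_QI {b : ℕ} {ζ : ℂ} (hζ : IsPrimitiveRoot ζ (2 ^ (b + 2))) :
    ζ ^ 2 ^ b ∈ QI := by
  have hsq : (ζ ^ 2 ^ b) ^ 2 = I ^ 2 := by
    have h2 : IsPrimitiveRoot (ζ ^ 2 ^ (b + 1)) 2 := by
      simpa [pow_succ, Nat.mul_div_cancel_left] using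
        hζ.pow_of_dvd (p := 2 ^ (b + 1)) (by positivity) (pow_dvd_pow 2 (by omega))
    rw [← pow_mul, ← pow_succ, h2.eq_neg_one_of_two_right, I_sq]
  have hI : I ∈ QI := mem_adjoin_simple_self ℚ I
  rcases sq_eq_sq_iff_eq_or_eq_neg.1 hsq with h | h <;> rw [h]
  · exact hI
  · exact neg_mem hI

theorem coe_algEquiv_gen_pow_two_pow {b : ℕ} {ζ : ℂ} (hζ : IsPrimitiveRoot ζ (2 ^ (b + 2)))
    (τ : QI⟮ζ⟯ ≃ₐ[QI] QI⟮ζ⟯) : (τ (AdjoinSimple.gen QI ζ) : ℂ) ^ 2 ^ b = ζ ^ 2 ^ b := by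
  rw [← IntermediateField.coe_pow, ← map_pow,
    algEquiv_apply_eq_self_of_algebraMap_eq τ (c := ⟨_, pow_two_pow_mem_QI hζ⟩) rfl]
  rfl

theorem two_pow_le_finrank_QI_adjoin {b : ℕ} {ζ : ℂ} (hζ : IsPrimitiveRoot ζ (2 ^ (b + 2))) :
    2 ^ b ≤ Module.finrank QI QI⟮ζ⟯ := by
  have : FiniteDimensional QI QI⟮ζ⟯ :=
    adjoin.finiteDimensional (hζ.isIntegral (by positivity)).tower_top
  have : FiniteDimensional ℚ QI⟮ζ⟯ := Module.Finite.trans QI QI⟮ζ⟯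
  have : FiniteDimensional ℚ (QI⟮ζ⟯.restrictScalars ℚ) := this
  have hcyc : Module.finrank ℚ ℚ⟮ζ⟯ = 2 * 2 ^ b := by
    have : IsCyclotomicExtension {2 ^ (b + 2)} ℚ ℚ⟮ζ⟯ := hζ.isCyclotomicExtension_adjoin_simple
    rw [IsCyclotomicExtension.finrank (n := 2 ^ (b + 2)) (K := ℚ) ℚ⟮ζ⟯
        (cyclotomic.irreducible_rat (by positivity)),
      Nat.totient_prime_pow Nat.prime_two (by omega), show b + 2 - 1 = b + 1 by omega]
    ring
  have hmono : Module.finrank ℚ ℚ⟮ζ⟯ ≤ Module.finrank ℚ QI⟮ζ⟯ :=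
    finrank_le_of_le_right (E := QI⟮ζ⟯.restrictScalars ℚ)
      (adjoin_simple_le_iff.2 (mem_adjoin_simple_self QI ζ))
  have htower := Module.finrank_mul_finrank ℚ QI QI⟮ζ⟯
  have := finrank_QI_le_two
  nlinarith

theorem two_pow_le_orderOf_of_forall_mem_zpowers {b : ℕ} {ζ : ℂ}
    (hζ : IsPrimitiveRoot ζ (2 ^ (b + 2))) {σ : QI⟮ζ⟯ ≃ₐ[QI] QI⟮ζ⟯}
    (hσ : ∀ τ : QI⟮ζ⟯ ≃ₐ[QI] QI⟮ζ⟯, τ ∈ Subgroup.zpowers σ) : 2 ^ b ≤ orderOf σ := by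
  have := hζ.isCyclotomicExtension_adjoin_simple (F := QI)
  have := IsCyclotomicExtension.finiteDimensional {2 ^ (b + 2)} QI QI⟮ζ⟯
  have := IsCyclotomicExtension.isGalois {2 ^ (b + 2)} QI QI⟮ζ⟯
  rw [orderOf_eq_card_of_forall_mem_zpowers hσ, IsGalois.card_aut_eq_finrank]
  exact two_pow_le_finrank_QI_adjoin hζ

/-- Let `n = 2^b`, `K = ℚ(i)(ζ) = ℚ(ζ)` with `ζ` a primitive `2^(b+2)`-th root of unity,
and `σ` a generator of `Gal(K/ℚ(i))`. Then the `n × n` matrix with `(j,k)` entry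
`(1/√n)·σʲ(ζᵏ)` is unitary. -/
theorem stmt_14 (b : ℕ) (ζ : ℂ) (hζ : IsPrimitiveRoot ζ (2 ^ (b + 2)))
    (σ : (IntermediateField.adjoin QI {ζ}) ≃ₐ[QI] (IntermediateField.adjoin QI {ζ}))
    (hgen : ∀ τ : (IntermediateField.adjoin QI {ζ}) ≃ₐ[QI] (IntermediateField.adjoin QI {ζ}),
      τ ∈ Subgroup.zpowers σ) :
    (Matrix.of fun j k : Fin (2 ^ b) =>
        (1 / (Real.sqrt (2 ^ b) : ℂ)) *
          (((σ ^ (j : ℕ))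
            (⟨ζ, IntermediateField.subset_adjoin QI {ζ} rfl⟩ ^ (k : ℕ)) : 
              IntermediateField.adjoin QI {ζ}) : ℂ)) *
      (Matrix.of fun j k : Fin (2 ^ b) =>
        (1 / (Real.sqrt (2 ^ b) : ℂ)) *
          (((σ ^ (j : ℕ))
            (⟨ζ, IntermediateField.subset_adjoin QI {ζ} rfl⟩ ^ (k : ℕ)) :
              IntermediateField.adjoin QI {ζ}) : ℂ))ᴴ = 1 := by
  set x : Fin (2 ^ b) → ℂ := fun j => ((σ ^ (j : ℕ)) (AdjoinSimple.gen QI ζ) : ℂ)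
  have hx : Function.Injective x := fun i j h =>
    have hord := two_pow_le_orderOf_of_forall_mem_zpowers hζ hgen
    Fin.ext (AdjoinSimple.injOn_pow_apply_gen σ (i.isLt.trans_le hord) (j.isLt.trans_le hord)
      (Subtype.ext h))
  have hnorm : ‖ζ ^ 2 ^ b‖ = 1 := by rw [norm_pow, hζ.norm'_eq_one (by positivity), one_pow]
  have hU : (Matrix.of fun j k : Fin (2 ^ b) => (1 / (Real.sqrt (2 ^ b) : ℂ)) *
      (((σ ^ (j : ℕ)) (⟨ζ, subset_adjoin QI {ζ} rfl⟩ ^ (k : ℕ)) : QI⟮ζ⟯) : ℂ))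
      = (1 / (Real.sqrt (2 ^ b) : ℂ)) • vandermonde x := by
    ext j k
    rw [of_apply, Matrix.smul_apply, vandermonde_apply, smul_eq_mul, map_pow]
    rfl
  rw [hU]
  convert inv_sqrt_smul_vandermonde_mul_conjTranspose hx hnorm
    (fun j => coe_algEquiv_gen_pow_two_pow hζ _) <;> norm_cast
end
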